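/- arXiv:2106.14837 — 2 statements merged into one kernel-verified Lean document; each statement's English description precedes it below -/
import Mathlib

section
/- Let n ≥ 2 and ε > 0. Given real numbers d_1,…,d_{n−1}, complex numbers a_1,…,a_{n−1}, and a real parameter 𝐚, let A be the n×n Hermitian arrow matrix determined by these data, and let λ_1 ≤ λ_2 ≤ ⋯ ≤ λ_n be the eigenvalues of A listed with multiplicity in increasing order. If 𝐚 ≥ (1/ε) ∑_{i=1}^{n−1} |a_i|² + ∑_{i=1}^{n−1} ( d_i + (n−2)|d_i| ) + (n−2)ε, then there exist indices i_1, …, i_{n−1} ∈ {1, …, n−1} such that |λ_α − d_{i_α}| < ε for every 1 ≤ α ≤ n−1, and moreover 0 ≤ λ_n − 𝐚 < (n−1)ε + | ∑_{α=1}^{n−1} (d_α − d_{i_α}) |. -/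
/-! If an eigenvalue `μ` satisfies `|μ - d i| ≥ ε` for every `i`, the eigenvector equations
`(μ - d i) v_i = a_i v_n` and `(μ - 𝐚) v_n = ∑ conj(a_i) v_i` give `|μ - 𝐚| ≤ ∑ |a_i|² / ε`.
The top eigenvalue dominates the diagonal entry `𝐚`, every eigenvalue exceeds `-∑ |d_i| - ε`, and
the eigenvalues sum to the trace `∑ d_i + 𝐚`; under the growth hypothesis on `𝐚` there is then no
room for a second eigenvalue near `𝐚`, so each of `λ_1, …, λ_{n-1}` lies within `ε` of some `d_i`.
Finally `λ_n - 𝐚 = ∑_α (d_α - λ_α)` by the trace identity. -/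

/-- The indices `0, …, m - 1` carry `d` and `a`; the last index `m` is the paper's `n`, with corner
entry `aa = 𝐚`. -/
def arrowMatrix (m : ℕ) (d : Fin m → ℝ) (a : Fin m → ℂ) (aa : ℝ) :
    Matrix (Fin (m + 1)) (Fin (m + 1)) ℂ :=
  Matrix.of fun i j =>
    if hi : i = Fin.last m then
      if hj : j = Fin.last m then (aa : ℂ) else (starRingEnd ℂ) (a (j.castPred hj))
    else
      if hj : j = Fin.last m then a (i.castPred hi)
      else if i = j then (d (i.castPred hi) : ℂ) else 0

open Matrix Finset

namespace Matrix.IsHermitian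

variable {𝕜 n : Type*} [RCLike 𝕜] [Fintype n] [DecidableEq n] {A : Matrix n n 𝕜}

open scoped ComplexOrder in
lemma re_apply_self_le_of_eigenvalues_le (hA : A.IsHermitian) {c : ℝ}
    (hc : ∀ k, hA.eigenvalues k ≤ c) (j : n) : RCLike.re (A j j) ≤ c := by
  have hpsd : ((c : 𝕜) • 1 - A).PosSemidef := by
    rw [hA.spectral_theorem, ← map_one (Unitary.conjStarAlgAut 𝕜 _ hA.eigenvectorUnitary),
      ← map_smul, ← map_sub, Unitary.conjStarAlgAut_apply,
      Unitary.isUnit_coe.posSemidef_star_right_conjugate_iff, ← diagonal_one, ← diagonal_smul,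
      diagonal_sub]
    exact posSemidef_diagonal_iff.mpr fun k => by simpa using hc k
  simpa [RCLike.smul_re] using RCLike.re_le_re (hpsd.diag_nonneg (i := j))

end Matrix.IsHermitian

section arrowMatrix

variable {m : ℕ} (d : Fin m → ℝ) (a : Fin m → ℂ) (aa : ℝ)

@[simp]
lemma arrowMatrix_castSucc_castSucc (i j : Fin m) :
    arrowMatrix m d a aa i.castSucc j.castSucc = if i = j then (d i : ℂ) else 0 := by
  simp [arrowMatrix, (Fin.castSucc_lt_last _).ne, Fin.castSucc_inj]

@[simp]
lemma arrowMatrix_castSucc_last (i : Fin m) :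
    arrowMatrix m d a aa i.castSucc (Fin.last m) = a i := by
  simp [arrowMatrix, (Fin.castSucc_lt_last _).ne]

@[simp]
lemma arrowMatrix_last_castSucc (i : Fin m) :
    arrowMatrix m d a aa (Fin.last m) i.castSucc = starRingEnd ℂ (a i) := by
  simp [arrowMatrix, (Fin.castSucc_lt_last _).ne]

@[simp]
lemma arrowMatrix_last_last : arrowMatrix m d a aa (Fin.last m) (Fin.last m) = aa := by
  simp [arrowMatrix]

lemma arrowMatrix_mulVec_castSucc (v : Fin (m + 1) → ℂ) (i : Fin m) :
    (arrowMatrix m d a aa *ᵥ v) i.castSucc = d i * v i.castSucc + a i * v (Fin.last m) := by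
  simp [mulVec, dotProduct, Fin.sum_univ_castSucc, ite_mul]

lemma arrowMatrix_mulVec_last (v : Fin (m + 1) → ℂ) :
    (arrowMatrix m d a aa *ᵥ v) (Fin.last m)
      = ∑ i, starRingEnd ℂ (a i) * v i.castSucc + aa * v (Fin.last m) := by
  simp [mulVec, dotProduct, Fin.sum_univ_castSucc]

lemma trace_arrowMatrix : (arrowMatrix m d a aa).trace = ∑ i, (d i : ℂ) + aa := by
  simp [trace, Fin.sum_univ_castSucc]

variable {d a aa}

lemma abs_sub_le_of_arrowMatrix_mulVec_eq_smul {ε μ : ℝ} (hε : 0 < ε)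
    (hfar : ∀ i, ε ≤ |μ - d i|) {v : Fin (m + 1) → ℂ} (hv : v ≠ 0)
    (hμ : arrowMatrix m d a aa *ᵥ v = (μ : ℂ) • v) :
    |μ - aa| ≤ (∑ i, ‖a i‖ ^ 2) / ε := by
  have hrow (i : Fin m) : ((μ - d i : ℝ) : ℂ) * v i.castSucc = a i * v (Fin.last m) := by
    have := congrFun hμ i.castSucc
    rw [arrowMatrix_mulVec_castSucc, Pi.smul_apply, smul_eq_mul] at this
    push_cast
    linear_combination -this
  have hcorner :
      ((μ - aa : ℝ) : ℂ) * v (Fin.last m) = ∑ i, starRingEnd ℂ (a i) * v i.castSucc := by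
    have := congrFun hμ (Fin.last m)
    rw [arrowMatrix_mulVec_last, Pi.smul_apply, smul_eq_mul] at this
    push_cast
    linear_combination -this
  have hvi (i : Fin m) : ε * ‖v i.castSucc‖ ≤ ‖a i‖ * ‖v (Fin.last m)‖ := by
    rw [← norm_mul, ← hrow, norm_mul, Complex.norm_real, Real.norm_eq_abs]
    gcongr
    exact hfar i
  have hlast : 0 < ‖v (Fin.last m)‖ := by
    refine norm_pos_iff.mpr fun h0 => hv (funext (Fin.lastCases h0 fun i => ?_))
    have := hvi i
    rw [h0, norm_zero, mul_zero] at this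
    exact norm_le_zero_iff.mp (nonpos_of_mul_nonpos_right this hε)
  rw [le_div_iff₀ hε, ← mul_le_mul_iff_left₀ hlast]
  calc |μ - aa| * ε * ‖v (Fin.last m)‖
      = ε * ‖∑ i, starRingEnd ℂ (a i) * v i.castSucc‖ := by
        rw [← hcorner, norm_mul, Complex.norm_real, Real.norm_eq_abs]; ring
    _ ≤ ε * ∑ i, ‖a i‖ * ‖v i.castSucc‖ := by
        gcongr
        exact (norm_sum_le _ _).trans_eq (by simp)
    _ = ∑ i, ‖a i‖ * (ε * ‖v i.castSucc‖) := by rw [mul_sum]; congr! 1; ring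
    _ ≤ ∑ i, ‖a i‖ * (‖a i‖ * ‖v (Fin.last m)‖) :=
        sum_le_sum fun i _ => mul_le_mul_of_nonneg_left (hvi i) (norm_nonneg _)
    _ = (∑ i, ‖a i‖ ^ 2) * ‖v (Fin.last m)‖ := by rw [sum_mul]; congr! 1 with i; ring

lemma Matrix.IsHermitian.arrowMatrix_eigenvalues_near_or_ge
    (hA : (arrowMatrix m d a aa).IsHermitian) {ε : ℝ} (hε : 0 < ε) (k : Fin (m + 1)) :
    (∃ i, |hA.eigenvalues k - d i| < ε) ∨ aa - (∑ i, ‖a i‖ ^ 2) / ε ≤ hA.eigenvalues k := by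
  refine or_iff_not_imp_left.mpr fun hfar => ?_
  simp only [not_exists, not_lt] at hfar
  have hv : ⇑(hA.eigenvectorBasis k) ≠ 0 := fun h =>
    hA.eigenvectorBasis.orthonormal.ne_zero k (by ext j; exact congrFun h j)
  have := abs_sub_le_of_arrowMatrix_mulVec_eq_smul hε hfar hv
    (by simpa using hA.mulVec_eigenvectorBasis k)
  linarith [(abs_le.mp this).1]

end arrowMatrix

section counting

variable {m : ℕ} {ε R aa : ℝ} {d : Fin m → ℝ} {lam : Fin (m + 1) → ℝ}

lemma neg_sum_abs_sub_lt_of_near_or_ge (hm : 1 ≤ m) (hε : 0 < ε)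
    (hgrowth : R + ∑ i, d i + (m - 1) * ∑ i, |d i| + (m - 1) * ε ≤ aa) {μ : ℝ}
    (hμ : (∃ i, |μ - d i| < ε) ∨ aa - R ≤ μ) :
    -∑ i, |d i| - ε < μ := by
  have hm' : (0 : ℝ) ≤ m - 1 := by
    rw [sub_nonneg]; exact_mod_cast hm
  rcases hμ with ⟨i, hi⟩ | hge
  · linarith [(abs_lt.mp hi).1, neg_abs_le (d i),
      single_le_sum (fun j _ => abs_nonneg (d j)) (mem_univ i)]
  · linarith [neg_abs_le (∑ i, d i), abs_sum_le_sum_abs d univ,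
      mul_nonneg hm' (sum_nonneg fun i (_ : i ∈ univ) => abs_nonneg (d i)), mul_nonneg hm' hε.le]

lemma exists_abs_castSucc_sub_lt (hm : 1 ≤ m) (hε : 0 < ε)
    (hgrowth : R + ∑ i, d i + (m - 1) * ∑ i, |d i| + (m - 1) * ε ≤ aa)
    (hnear : ∀ β, (∃ i, |lam β - d i| < ε) ∨ aa - R ≤ lam β)
    (hlast : aa ≤ lam (Fin.last m)) (hsum : ∑ β, lam β = ∑ i, d i + aa) (α : Fin m) :
    ∃ i, |lam α.castSucc - d i| < ε := by
  by_contra! hfar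
  have hα : aa - R ≤ lam α.castSucc := (hnear _).resolve_left (by simpa using hfar)
  rw [Fin.sum_univ_castSucc, ← add_sum_erase univ _ (mem_univ α)] at hsum
  have hcard : #(univ.erase α) = m - 1 := by simp
  obtain rfl | hm2 := hm.eq_or_lt
  -- With no other eigenvalues the trace bound is not strict; farness from `d α` is used instead.
  · have hd : ∑ i, d i = d α := by rw [Fin.sum_univ_one, Subsingleton.elim 0 α]
    have hothers : ∑ β ∈ univ.erase α, lam β.castSucc = 0 :=
      sum_eq_zero fun β hβ => absurd (Subsingleton.elim β α) (ne_of_mem_erase hβ)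
    have hge : d α ≤ lam α.castSucc := by rw [hd] at hgrowth; norm_num at hgrowth; linarith
    have := hfar α
    rw [abs_of_nonneg (sub_nonneg.mpr hge)] at this
    linarith
  · have hne : (univ.erase α).Nonempty := by rw [← card_pos, hcard]; omega
    have hothers : (m - 1 : ℝ) * (-∑ i, |d i| - ε) < ∑ β ∈ univ.erase α, lam β.castSucc := by
      have := sum_lt_sum_of_nonempty hne fun β _ =>
        neg_sum_abs_sub_lt_of_near_or_ge hm hε hgrowth (hnear β.castSucc)
      rwa [sum_const, hcard, nsmul_eq_mul, Nat.cast_sub hm, Nat.cast_one] at this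
    linarith

lemma last_sub_lt_of_abs_castSucc_sub_lt (hm : 1 ≤ m) (hsum : ∑ β, lam β = ∑ i, d i + aa)
    {idx : Fin m → Fin m} (hidx : ∀ α, |lam α.castSucc - d (idx α)| < ε) :
    lam (Fin.last m) - aa < m * ε + |∑ α, (d α - d (idx α))| := by
  have htrace : lam (Fin.last m) - aa = ∑ α, (d α - lam α.castSucc) := by
    rw [Fin.sum_univ_castSucc] at hsum
    rw [sum_sub_distrib]
    linarith
  have hclose : ∑ α, (d (idx α) - lam α.castSucc) < ∑ _α : Fin m, ε :=
    sum_lt_sum_of_nonempty (univ_nonempty_iff.mpr ⟨⟨0, hm⟩⟩)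
      fun α _ => by linarith [(abs_lt.mp (hidx α)).1]
  rw [sum_const, card_univ, Fintype.card_fin, nsmul_eq_mul] at hclose
  calc lam (Fin.last m) - aa
      = ∑ α, (d α - d (idx α)) + ∑ α, (d (idx α) - lam α.castSucc) := by
        rw [htrace, ← sum_add_distrib]
        simp only [sub_add_sub_cancel]
    _ < |∑ α, (d α - d (idx α))| + m * ε := add_lt_add_of_le_of_lt (le_abs_self _) hclose
    _ = m * ε + |∑ α, (d α - d (idx α))| := add_comm _ _

end counting

/-- counting lemma. Writing `n = m + 1 ≥ 2`, let
`λ_1 ≤ ⋯ ≤ λ_n` be the eigenvalues of the arrow matrix in increasing order.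
If `𝐚 ≥ (1/ε) ∑ |a_i|² + ∑ (d_i + (n−2)|d_i|) + (n−2)ε`, then there are indices
`i_1, …, i_{n−1}` with `|λ_α − d_{i_α}| < ε` for each `α ≤ n−1`, and
`0 ≤ λ_n − 𝐚 < (n−1)ε + |∑_α (d_α − d_{i_α})|`. -/
theorem stmt_2 (m : ℕ) (hm : 1 ≤ m) (ε : ℝ) (hε : 0 < ε)
    (d : Fin m → ℝ) (a : Fin m → ℂ) (aa : ℝ)
    (hA : (arrowMatrix m d a aa).IsHermitian)
    (lam : Fin (m + 1) → ℝ) (e : Equiv.Perm (Fin (m + 1)))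
    (hlam : lam = hA.eigenvalues ∘ e) (hmono : Monotone lam)
    (hgrowth : aa ≥ (1 / ε) * ∑ i : Fin m, ‖a i‖ ^ 2
        + ∑ i : Fin m, (d i + ((m + 1 : ℝ) - 2) * |d i|)
        + ((m + 1 : ℝ) - 2) * ε) :
    ∃ idx : Fin m → Fin m,
      (∀ α : Fin m, |lam α.castSucc - d (idx α)| < ε) ∧
        0 ≤ lam (Fin.last m) - aa ∧
          lam (Fin.last m) - aa
            < ((m + 1 : ℝ) - 1) * ε + |∑ α : Fin m, (d α - d (idx α))| := by
  have hgrowth' : (∑ i, ‖a i‖ ^ 2) / ε + ∑ i, d i + (m - 1) * ∑ i, |d i| + (m - 1) * ε ≤ aa := by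
    rw [sum_add_distrib, ← mul_sum, one_div_mul_eq_div] at hgrowth
    linarith
  have hnear (β : Fin (m + 1)) :
      (∃ i, |lam β - d i| < ε) ∨ aa - (∑ i, ‖a i‖ ^ 2) / ε ≤ lam β := by
    rw [hlam]
    exact hA.arrowMatrix_eigenvalues_near_or_ge hε (e β)
  have hlast : aa ≤ lam (Fin.last m) := by
    simpa using hA.re_apply_self_le_of_eigenvalues_le (c := lam (Fin.last m))
      (fun k => by simpa [hlam] using hmono (Fin.le_last (e.symm k))) (Fin.last m)
  have hsum : ∑ β, lam β = ∑ i, d i + aa := by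
    have := hA.trace_eq_sum_eigenvalues
    rw [trace_arrowMatrix] at this
    simp only [hlam, Function.comp_apply, Equiv.sum_comp]
    apply Complex.ofReal_injective
    push_cast
    exact this.symm
  choose idx hidx using exists_abs_castSucc_sub_lt hm hε hgrowth' hnear hlast hsum
  refine ⟨idx, hidx, by linarith, ?_⟩
  rw [add_sub_cancel_right]
  exact last_sub_lt_of_abs_castSucc_sub_lt hm hsum hidx
end

section
/- Let n ≥ 2, let Γ ⊂ ℝⁿ be an open convex cone with vertex at the origin, symmetric under permutations of coordinates, containing the positive cone Γ_n, with ∂Γ ≠ ∅, and let f : Γ → ℝ be a C¹ concave function, symmetric under permutations of its arguments, with ∂f/∂λ_i > 0 on Γ for each i, and satisfying: for every σ < sup_Γ f and every λ ∈ Γ there exists T > 0 such that f(tλ) > σ for all t ≥ T. Then for any n×n complex Hermitian matrices A and B whose eigenvalue vectors satisfy λ(A) ∈ Γ and λ(B) ∈ Γ, one also has λ(A+B) ∈ Γ and f(λ(A+B)) > f(λ(A)). -/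
/-!
Let `u`, `v`, `w` be eigenbases of `A + B`, `A`, `B`. Then
`λᵢ(A + B) = ⟪uᵢ, A uᵢ⟫ + ⟪uᵢ, B uᵢ⟫ = (S λ(A))ᵢ + (T λ(B))ᵢ` for the doubly stochastic matrices
`S = (‖⟪uᵢ, vⱼ⟫‖²)` and `T = (‖⟪uᵢ, wⱼ⟫‖²)`. By Birkhoff's theorem `S λ(A)` is a convex combination
of permutations of `λ(A)`, so it lies in `Γ` and, by concavity and symmetry, `f (S λ(A)) ≥ f λ(A)`.

It remains that `f x < f (x + y)` on the cone. Writing `(1 - t) x + y = (1 - t) x + t (t⁻¹ y)`,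
concavity and the growth of `f` along the ray of `y` give `f ((1 - t) x + y) ≥ f x - t`, hence
`f (x + y) ≥ f x` as `t → 0⁺`. Strictness comes from first moving from `x` a little in a
coordinate direction `e`, where `f` strictly increases, and then adding `y - t e ∈ Γ`.
-/

open Filter Topology Matrix

section ConvexCone

variable {E : Type*} [NormedAddCommGroup E] [NormedSpace ℝ E] {Γ : Set E} {f : E → ℝ} {x y : E}

lemma add_mem_of_convex_of_smul_mem (hconv : Convex ℝ Γ)
    (hcone : ∀ x ∈ Γ, ∀ t : ℝ, 0 < t → t • x ∈ Γ) (hx : x ∈ Γ) (hy : y ∈ Γ) : x + y ∈ Γ := by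
  convert hcone _ (hconv hx hy (by norm_num : (0 : ℝ) ≤ 1 / 2) (by norm_num : (0 : ℝ) ≤ 1 / 2)
    (by norm_num)) 2 two_pos using 1
  module

lemma eventually_lt_map_add_smul (hf : DifferentiableAt ℝ f x) {e : E}
    (he : 0 < fderiv ℝ f x e) : ∀ᶠ t in 𝓝[>] (0 : ℝ), f x < f (x + t • e) := by
  filter_upwards [(hf.hasFDerivAt.hasLineDerivAt e).tendsto_slope_zero_right.eventually
    (eventually_gt_nhds he), self_mem_nhdsWithin] with t hslope (ht : 0 < t)
  rw [smul_eq_mul] at hslope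
  exact sub_pos.1 (pos_of_mul_pos_right hslope (inv_pos.2 ht).le)

lemma ConcaveOn.le_map_add (hconc : ConcaveOn ℝ Γ f) (hΓo : IsOpen Γ)
    (hcone : ∀ x ∈ Γ, ∀ t : ℝ, 0 < t → t • x ∈ Γ) (hcont : ContinuousOn f Γ)
    (hstruct : ∀ σ : ℝ, (∃ y ∈ Γ, σ < f y) → ∀ x ∈ Γ, ∃ T > (0 : ℝ), ∀ t ≥ T, σ < f (t • x))
    (hx : x ∈ Γ) (hy : y ∈ Γ) : f x ≤ f (x + y) := by
  obtain ⟨T, -, hT⟩ := hstruct (f x - 1) ⟨x, hx, by linarith⟩ y hy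
  have hfar : ∀ᶠ t in 𝓝[>] (0 : ℝ), f x - 1 < f (t⁻¹ • y) :=
    (tendsto_inv_nhdsGT_zero.eventually (eventually_ge_atTop T)).mono fun t ht => hT _ ht
  have hbound : ∀ᶠ t in 𝓝[>] (0 : ℝ), f x - t ≤ f ((1 - t) • x + y) := by
    filter_upwards [hfar, Ioo_mem_nhdsGT one_pos] with t hft ⟨ht0, ht1⟩
    have hconcave : (1 - t) • f x + t • f (t⁻¹ • y) ≤ f ((1 - t) • x + t • t⁻¹ • y) :=
      hconc.2 hx (hcone y hy _ (inv_pos.2 ht0)) (by linarith) ht0.le (by ring)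
    rw [smul_inv_smul₀ ht0.ne', smul_eq_mul, smul_eq_mul] at hconcave
    nlinarith
  have hleft : Tendsto (fun t : ℝ => f x - t) (𝓝[>] 0) (𝓝 (f x)) := by
    simpa using ((continuous_sub_left (f x)).tendsto 0).mono_left nhdsWithin_le_nhds
  have hright : Tendsto (fun t : ℝ => f ((1 - t) • x + y)) (𝓝[>] 0) (𝓝 (f (x + y))) := by
    have hxy := hΓo.mem_nhds (add_mem_of_convex_of_smul_mem hconc.1 hcone hx hy)
    refine ((hcont.continuousAt hxy).tendsto.comp ?_).mono_left nhdsWithin_le_nhds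
    exact Continuous.tendsto' (by fun_prop) 0 _ (by simp)
  exact le_of_tendsto_of_tendsto hleft hright hbound

lemma ConcaveOn.lt_map_add (hconc : ConcaveOn ℝ Γ f) (hΓo : IsOpen Γ)
    (hcone : ∀ x ∈ Γ, ∀ t : ℝ, 0 < t → t • x ∈ Γ) (hcont : ContinuousOn f Γ)
    (hstruct : ∀ σ : ℝ, (∃ y ∈ Γ, σ < f y) → ∀ x ∈ Γ, ∃ T > (0 : ℝ), ∀ t ≥ T, σ < f (t • x))
    (hx : x ∈ Γ) (hy : y ∈ Γ) (hf : DifferentiableAt ℝ f x) {e : E}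
    (he : 0 < fderiv ℝ f x e) : f x < f (x + y) := by
  have hnear : ∀ z ∈ Γ, ∀ v : E, ∀ᶠ t in 𝓝[>] (0 : ℝ), z + t • v ∈ Γ := fun z hz v =>
    nhdsWithin_le_nhds <|
      (Continuous.tendsto' (by fun_prop) 0 z (by simp)).eventually (hΓo.mem_nhds hz)
  obtain ⟨t, hlt, hxt, hyt⟩ :=
    ((eventually_lt_map_add_smul hf he).and ((hnear x hx e).and (hnear y hy (-e)))).exists
  calc f x < f (x + t • e) := hlt
    _ ≤ f (x + t • e + (y + t • -e)) :=
      hconc.le_map_add hΓo hcone hcont hstruct hxt hyt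
    _ = f (x + y) := by congr 1; module

end ConvexCone

section DoublyStochastic

variable {ι : Type*} [Fintype ι] [DecidableEq ι] {S : Matrix ι ι ℝ} {Γ : Set (ι → ℝ)}
  {f : (ι → ℝ) → ℝ} {x : ι → ℝ}

lemma exists_mulVec_eq_sum_comp_perm (hS : S ∈ doublyStochastic ℝ ι) (x : ι → ℝ) :
    ∃ w : Equiv.Perm ι → ℝ, (∀ σ, 0 ≤ w σ) ∧ ∑ σ, w σ = 1 ∧ S *ᵥ x = ∑ σ, w σ • (x ∘ σ) := by
  obtain ⟨w, hw0, hw1, rfl⟩ := exists_eq_sum_perm_of_mem_doublyStochastic hS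
  refine ⟨w, hw0, hw1, ?_⟩
  simp [Matrix.sum_mulVec, Matrix.smul_mulVec, permMatrix_mulVec]

lemma mulVec_mem_of_mem_doublyStochastic (hconv : Convex ℝ Γ)
    (hsym : ∀ σ : Equiv.Perm ι, ∀ x ∈ Γ, x ∘ σ ∈ Γ) (hS : S ∈ doublyStochastic ℝ ι)
    (hx : x ∈ Γ) : S *ᵥ x ∈ Γ := by
  obtain ⟨w, hw0, hw1, hSx⟩ := exists_mulVec_eq_sum_comp_perm hS x
  rw [hSx]
  exact hconv.sum_mem (fun σ _ => hw0 σ) hw1 fun σ _ => hsym σ x hx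

lemma ConcaveOn.le_map_mulVec (hconc : ConcaveOn ℝ Γ f)
    (hsym : ∀ σ : Equiv.Perm ι, ∀ x ∈ Γ, x ∘ σ ∈ Γ)
    (hfsym : ∀ σ : Equiv.Perm ι, ∀ x ∈ Γ, f (x ∘ σ) = f x) (hS : S ∈ doublyStochastic ℝ ι)
    (hx : x ∈ Γ) : f x ≤ f (S *ᵥ x) := by
  obtain ⟨w, hw0, hw1, hSx⟩ := exists_mulVec_eq_sum_comp_perm hS x
  calc f x = ∑ σ, w σ • f (x ∘ σ) := by simp [hfsym _ x hx, ← Finset.sum_mul, hw1]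
    _ ≤ f (S *ᵥ x) := hSx ▸ hconc.le_map_sum (fun σ _ => hw0 σ) hw1 fun σ _ => hsym σ x hx

end DoublyStochastic

section Spectral

variable {𝕜 ι E : Type*} [RCLike 𝕜] [Fintype ι] [NormedAddCommGroup E]
  [InnerProductSpace 𝕜 E]

lemma OrthonormalBasis.sq_norm_inner_mem_doublyStochastic [DecidableEq ι]
    (b c : OrthonormalBasis ι 𝕜 E) :
    Matrix.of (fun i j => ‖inner 𝕜 (b i) (c j)‖ ^ 2) ∈ doublyStochastic ℝ ι := by
  rw [mem_doublyStochastic_iff_sum]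
  refine ⟨fun i j => sq_nonneg _, fun i => ?_, fun j => ?_⟩
  · simp [c.sum_sq_norm_inner_left (b i), b.orthonormal.1 i]
  · simp [b.sum_sq_norm_inner_right, c.orthonormal.1 j]

lemma OrthonormalBasis.re_inner_map_self_eq_sum (c : OrthonormalBasis ι 𝕜 E) {T : E →ₗ[𝕜] E}
    {a : ι → ℝ} (hT : ∀ j, T (c j) = (a j : 𝕜) • c j) (x : E) :
    RCLike.re (inner 𝕜 x (T x)) = ∑ j, ‖inner 𝕜 x (c j)‖ ^ 2 * a j := by
  have hTx : T x = ∑ j, (inner 𝕜 (c j) x * a j) • c j := by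
    conv_lhs => rw [← c.sum_repr' x]
    simp [map_sum, hT, smul_smul]
  rw [hTx, inner_sum, map_sum]
  refine Finset.sum_congr rfl fun j _ => ?_
  rw [inner_smul_right, ← inner_conj_symm, mul_right_comm, RCLike.conj_mul]
  norm_cast

lemma Matrix.IsHermitian.toEuclideanLin_eigenvectorBasis [DecidableEq ι] {A : Matrix ι ι 𝕜}
    (hA : A.IsHermitian) (j : ι) :
    toEuclideanLin A (hA.eigenvectorBasis j) = (hA.eigenvalues j : 𝕜) • hA.eigenvectorBasis j := by
  ext k
  simp [toLpLin_apply, hA.mulVec_eigenvectorBasis]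

lemma Matrix.IsHermitian.exists_eigenvalues_add_eq [DecidableEq ι] {A B : Matrix ι ι 𝕜}
    (hA : A.IsHermitian) (hB : B.IsHermitian) :
    ∃ S ∈ doublyStochastic ℝ ι, ∃ T ∈ doublyStochastic ℝ ι,
      (hA.add hB).eigenvalues = S *ᵥ hA.eigenvalues + T *ᵥ hB.eigenvalues := by
  set u := (hA.add hB).eigenvectorBasis
  refine ⟨_, u.sq_norm_inner_mem_doublyStochastic hA.eigenvectorBasis,
    _, u.sq_norm_inner_mem_doublyStochastic hB.eigenvectorBasis, funext fun i => ?_⟩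
  have hquad {M : Matrix ι ι 𝕜} (hM : M.IsHermitian) :
      RCLike.re (inner 𝕜 (u i) (toEuclideanLin M (u i))) =
        (Matrix.of (fun k j => ‖inner 𝕜 (u k) (hM.eigenvectorBasis j)‖ ^ 2) *ᵥ hM.eigenvalues) i :=
    (hM.eigenvectorBasis.re_inner_map_self_eq_sum hM.toEuclideanLin_eigenvectorBasis (u i)).trans
      (by simp [mulVec, dotProduct])
  rw [(hA.add hB).eigenvalues_eq i, Pi.add_apply, ← hquad hA, ← hquad hB, ← map_add,
    ← inner_add_right, ← LinearMap.add_apply, ← map_add, EuclideanSpace.inner_eq_star_dotProduct,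
    dotProduct_comm]
  rfl

end Spectral

theorem stmt_5_general (n : ℕ) (hn : 2 ≤ n) (Γ : Set (Fin n → ℝ)) (f : (Fin n → ℝ) → ℝ)
    (hΓopen : IsOpen Γ) (hΓconv : Convex ℝ Γ)
    (hΓcone : ∀ x ∈ Γ, ∀ t : ℝ, 0 < t → t • x ∈ Γ)
    (hΓsym : ∀ σ : Equiv.Perm (Fin n), ∀ x ∈ Γ, x ∘ σ ∈ Γ)
    (hC1 : ContDiffOn ℝ 1 f Γ)
    (hconc : ConcaveOn ℝ Γ f)
    (hfsym : ∀ σ : Equiv.Perm (Fin n), ∀ x ∈ Γ, f (x ∘ σ) = f x)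
    (hfi : ∀ x ∈ Γ, ∀ i : Fin n, 0 < fderiv ℝ f x (Pi.single i 1))
    (hstruct : ∀ σ : ℝ, (∃ y ∈ Γ, σ < f y) → ∀ x ∈ Γ, ∃ T > (0 : ℝ), ∀ t ≥ T, σ < f (t • x))
    (A B : Matrix (Fin n) (Fin n) ℂ)
    (hA : A.IsHermitian) (hB : B.IsHermitian)
    (hAΓ : hA.eigenvalues ∈ Γ) (hBΓ : hB.eigenvalues ∈ Γ) :
    (hA.add hB).eigenvalues ∈ Γ ∧ f hA.eigenvalues < f ((hA.add hB).eigenvalues) := by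
  obtain ⟨S, hS, T, hT, hsum⟩ := hA.exists_eigenvalues_add_eq hB
  have hSA := mulVec_mem_of_mem_doublyStochastic hΓconv hΓsym hS hAΓ
  have hTB := mulVec_mem_of_mem_doublyStochastic hΓconv hΓsym hT hBΓ
  have hdiff : DifferentiableAt ℝ f (S *ᵥ hA.eigenvalues) :=
    (hC1.differentiableOn one_ne_zero _ hSA).differentiableAt (hΓopen.mem_nhds hSA)
  rw [hsum]
  refine ⟨add_mem_of_convex_of_smul_mem hΓconv hΓcone hSA hTB, ?_⟩
  calc f hA.eigenvalues ≤ f (S *ᵥ hA.eigenvalues) := hconc.le_map_mulVec hΓsym hfsym hS hAΓ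
    _ < f (S *ᵥ hA.eigenvalues + T *ᵥ hB.eigenvalues) :=
      hconc.lt_map_add hΓopen hΓcone hC1.continuousOn hstruct hSA hTB hdiff
        (hfi _ hSA ⟨0, by omega⟩)

/-- monotonicity of `F(A) = f(λ(A))` under addition of matrices with
eigenvalues in `Γ`. Let `Γ ⊂ ℝⁿ` (`n ≥ 2`) be an open convex symmetric cone with
vertex at the origin containing the positive cone and with nonempty boundary, and
let `f` be a symmetric `C¹` concave function on `Γ` with positive partial derivatives
satisfying the structural condition: for every `σ < sup_Γ f` and every `λ ∈ Γ`,
`f(tλ) > σ` for all sufficiently large `t`. Then for Hermitian matrices `A`, `B`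
with `λ(A) ∈ Γ` and `λ(B) ∈ Γ` we have `λ(A+B) ∈ Γ` and `f(λ(A+B)) > f(λ(A))`. -/
theorem stmt_5 (n : ℕ) (hn : 2 ≤ n) (Γ : Set (Fin n → ℝ)) (f : (Fin n → ℝ) → ℝ)
    (hΓopen : IsOpen Γ) (hΓconv : Convex ℝ Γ)
    (hΓcone : ∀ x ∈ Γ, ∀ t : ℝ, 0 < t → t • x ∈ Γ)
    (hΓsym : ∀ σ : Equiv.Perm (Fin n), ∀ x ∈ Γ, x ∘ σ ∈ Γ)
    (hΓpos : {x : Fin n → ℝ | ∀ i, 0 < x i} ⊆ Γ)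
    (hΓbd : (frontier Γ).Nonempty)
    (hC1 : ContDiffOn ℝ 1 f Γ)
    (hconc : ConcaveOn ℝ Γ f)
    (hfsym : ∀ σ : Equiv.Perm (Fin n), ∀ x ∈ Γ, f (x ∘ σ) = f x)
    (hfi : ∀ x ∈ Γ, ∀ i : Fin n, 0 < fderiv ℝ f x (Pi.single i 1))
    (hstruct : ∀ σ : ℝ, (∃ y ∈ Γ, σ < f y) → ∀ x ∈ Γ, ∃ T > (0 : ℝ), ∀ t ≥ T, σ < f (t • x))
    (A B : Matrix (Fin n) (Fin n) ℂ)
    (hA : A.IsHermitian) (hB : B.IsHermitian)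
    (hAΓ : hA.eigenvalues ∈ Γ) (hBΓ : hB.eigenvalues ∈ Γ) :
    (hA.add hB).eigenvalues ∈ Γ ∧ f hA.eigenvalues < f ((hA.add hB).eigenvalues) :=
  stmt_5_general n hn Γ f hΓopen hΓconv hΓcone hΓsym hC1 hconc hfsym hfi hstruct A B hA hB hAΓ hBΓ
end
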